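/- arXiv:2411.01605 — 6 statements merged into one kernel-verified Lean document; each statement's English description precedes it below -/
import Mathlib

section
/- Generalized Bohr inequality: Let R > 0 and let f be a bounded holomorphic function on the open disk D_R = {z ∈ ℂ : |z| < R}, with power series expansion f(z) = ∑_{n=0}^∞ a_n z^n at the origin. Then for every z ∈ ℂ with |z| ≤ R/3, the majorant series satisfies ∑_{n=0}^∞ |a_n| |z|^n ≤ sup_{w ∈ D_R} |f(w)|. -/
/-!
For `f` bounded by `M` on the disk of radius `R`, Wiener's inequality
`|aₙ| Rⁿ ≤ M - |a₀|² / M` (`n ≥ 1`) gives the radius `R / 3`: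
`∑ |aₙ| |z|ⁿ ≤ |a₀| + (M - |a₀|² / M) / 2 = M - (M - |a₀|)² / (2M) ≤ M`.
For `n = 1` Wiener's inequality is the Schwarz–Pick estimate at the origin, i.e. the Schwarz lemma
applied after a Blaschke factor moving `f 0` to `0`. For general `n` it is the case `n = 1` for
`G w = ∑ₖ a_{nk} wᵏ`: `G (zⁿ)` is the mean of `f` over the points `ωʲ z`, `ω` a primitive `n`-th
root of unity, so `G` is again bounded by `M`.
-/

open Metric Set Finset Complex ComplexConjugate FormalMultilinearSeries Topology

section PowerSeries

variable {c : ℕ → ℂ} {F : ℂ → ℂ} {r : ℝ}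

theorem eq_of_hasSum_mul_zero_pow {y : ℂ} (h : HasSum (fun n => c n * 0 ^ n) y) : y = c 0 :=
  h.unique <| by simpa using hasSum_single (f := fun n => c n * 0 ^ n) 0 (by simp_all)

theorem hasFPowerSeriesOnBall_ofScalars_of_hasSum (hr : 0 < r)
    (hF : ∀ z ∈ ball (0 : ℂ) r, HasSum (fun n => c n * z ^ n) (F z)) :
    HasFPowerSeriesOnBall F (ofScalars ℂ c) 0 (ENNReal.ofReal r) where
  r_le := ENNReal.le_of_forall_nnreal_lt fun ρ hρ => by
    have hρr : (ρ : ℝ) < r := by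
      rwa [← ENNReal.ofReal_coe_nnreal, ENNReal.ofReal_lt_ofReal_iff hr] at hρ
    have hsum := summable_norm_iff.2 (hF ρ (by simpa using hρr)).summable
    refine le_radius_of_summable _ ?_
    simpa [ofScalars_norm] using hsum
  r_pos := ENNReal.ofReal_pos.2 hr
  hasSum {y} hy := by
    rw [eball_ofReal] at hy
    simpa [ofScalars_apply_eq, mul_comm] using hF y hy

theorem differentiableOn_of_hasSum (hr : 0 < r)
    (hF : ∀ z ∈ ball (0 : ℂ) r, HasSum (fun n => c n * z ^ n) (F z)) :
    DifferentiableOn ℂ F (ball 0 r) := by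
  simpa using (hasFPowerSeriesOnBall_ofScalars_of_hasSum hr hF).differentiableOn

theorem deriv_zero_eq_of_hasSum (hr : 0 < r)
    (hF : ∀ z ∈ ball (0 : ℂ) r, HasSum (fun n => c n * z ^ n) (F z)) :
    deriv F 0 = c 1 := by
  simpa [ofScalars_apply_eq] using
    (hasFPowerSeriesOnBall_ofScalars_of_hasSum hr hF).hasFPowerSeriesAt.deriv

end PowerSeries

section Blaschke

noncomputable def blaschkeFactor (u v : ℂ) : ℂ := (v - u) / (1 - conj u * v)

variable {u v : ℂ}

theorem normSq_one_sub_conj_mul_sub_normSq_sub (u v : ℂ) :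
    normSq (1 - conj u * v) - normSq (v - u) = (1 - normSq u) * (1 - normSq v) := by
  simp only [normSq_apply, mul_re, mul_im, sub_re, sub_im, one_re, one_im, conj_re, conj_im]
  ring

theorem one_sub_conj_mul_ne_zero (hu : ‖u‖ < 1) (hv : ‖v‖ ≤ 1) : 1 - conj u * v ≠ 0 := by
  refine sub_ne_zero.2 fun h => ?_
  have : ‖conj u * v‖ < 1 := by
    rw [norm_mul, RCLike.norm_conj]
    nlinarith [norm_nonneg u, norm_nonneg v]
  simp [← h] at this

theorem norm_blaschkeFactor_le_one (hu : ‖u‖ < 1) (hv : ‖v‖ ≤ 1) : ‖blaschkeFactor u v‖ ≤ 1 := by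
  have hden := one_sub_conj_mul_ne_zero hu hv
  rw [blaschkeFactor, norm_div, div_le_one (norm_pos_iff.2 hden), ← sq_le_sq₀ (norm_nonneg _)
    (norm_nonneg _), Complex.sq_norm, Complex.sq_norm, ← sub_nonneg,
    normSq_one_sub_conj_mul_sub_normSq_sub, ← Complex.sq_norm, ← Complex.sq_norm]
  apply mul_nonneg <;> nlinarith [norm_nonneg u, norm_nonneg v]

theorem differentiableAt_blaschkeFactor (hu : ‖u‖ < 1) (hv : ‖v‖ ≤ 1) :
    DifferentiableAt ℂ (blaschkeFactor u) v :=
  (differentiableAt_id.sub_const u).div ((differentiableAt_id.const_mul _).const_sub 1)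
    (one_sub_conj_mul_ne_zero hu hv)

theorem hasDerivAt_blaschkeFactor_self (hu : ‖u‖ < 1) :
    HasDerivAt (blaschkeFactor u) ((1 - ‖u‖ ^ 2 : ℝ) : ℂ)⁻¹ u := by
  have hden := one_sub_conj_mul_ne_zero hu hu.le
  have h : HasDerivAt (blaschkeFactor u) _ u := ((hasDerivAt_id u).sub_const u).div
    (((hasDerivAt_id u).const_mul (conj u)).const_sub 1) hden
  simp only [_root_.id, sub_self, zero_mul, sub_zero, one_mul, conj_mul'] at h hden
  refine h.congr_deriv ?_
  push_cast
  field_simp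

end Blaschke

theorem norm_deriv_mul_le_one_sub_sq {g : ℂ → ℂ} {R : ℝ} (hR : 0 < R)
    (hd : DifferentiableOn ℂ g (ball 0 R)) (hg : MapsTo g (ball 0 R) (closedBall 0 1)) :
    ‖deriv g 0‖ * R ≤ 1 - ‖g 0‖ ^ 2 := by
  have hball : ball (0 : ℂ) R ∈ 𝓝 0 := ball_mem_nhds 0 hR
  have hgle : ∀ w ∈ ball (0 : ℂ) R, ‖g w‖ ≤ 1 := fun w hw => by simpa using hg hw
  rcases (hgle 0 (mem_ball_self hR)).lt_or_eq with hlt | heq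
  · set ψ := blaschkeFactor (g 0) ∘ g
    have hψd : DifferentiableOn ℂ ψ (ball 0 R) := fun w hw =>
      (differentiableAt_blaschkeFactor hlt (hgle w hw)).comp_differentiableWithinAt w (hd w hw)
    have hψ : MapsTo ψ (ball 0 R) (closedBall (ψ 0) 1) := fun w hw => by
      simpa [ψ, blaschkeFactor] using norm_blaschkeFactor_le_one hlt (hgle w hw)
    have hderiv : deriv ψ 0 = ((1 - ‖g 0‖ ^ 2 : ℝ) : ℂ)⁻¹ * deriv g 0 :=
      ((hasDerivAt_blaschkeFactor_self hlt).comp 0 (hd.differentiableAt hball).hasDerivAt).deriv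
    have hpos : 0 < 1 - ‖g 0‖ ^ 2 := by nlinarith [norm_nonneg (g 0)]
    have hschwarz := Complex.norm_deriv_le_div_of_mapsTo_ball hψd hψ hR
    rw [hderiv, norm_mul, norm_inv, norm_real, Real.norm_of_nonneg hpos.le, inv_mul_le_iff₀ hpos,
      mul_one_div, le_div_iff₀ hR] at hschwarz
    linarith
  · have hmax : IsLocalMax (norm ∘ g) 0 :=
      Filter.eventually_of_mem hball fun w hw => by simpa [heq] using hgle w hw
    have hconst : g =ᶠ[𝓝 0] fun _ => g 0 :=
      Complex.eventually_eq_of_isLocalMax_norm (hd.eventually_differentiableAt hball) hmax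
    simp [hconst.deriv_eq, heq]

section RootsOfUnity

theorem IsPrimitiveRoot.sum_pow_pow_eq_ite {K : Type*} [Field K] {ω : K} {n : ℕ}
    (hω : IsPrimitiveRoot ω n) (m : ℕ) :
    ∑ j ∈ range n, (ω ^ j) ^ m = if n ∣ m then (n : K) else 0 := by
  simp_rw [← pow_mul, mul_comm _ m, pow_mul]
  split_ifs with hdvd
  · simp [(hω.pow_eq_one_iff_dvd m).2 hdvd]
  · have hne : ω ^ m ≠ 1 := fun h => hdvd ((hω.pow_eq_one_iff_dvd m).1 h)
    rw [geom_sum_eq hne, ← pow_mul, mul_comm, pow_mul, hω.pow_eq_one, one_pow, sub_self,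
      zero_div]

variable {𝕜 : Type*} [NormedField 𝕜] [CharZero 𝕜]

theorem hasSum_nat_mul_of_isPrimitiveRoot {c : ℕ → 𝕜} {s : ℕ → 𝕜} {ω z : 𝕜} {n : ℕ}
    (hω : IsPrimitiveRoot ω n) (hn : n ≠ 0)
    (hc : ∀ j ∈ range n, HasSum (fun m => c m * (ω ^ j * z) ^ m) (s j)) :
    HasSum (fun k => c (n * k) * z ^ (n * k)) ((n : 𝕜)⁻¹ * ∑ j ∈ range n, s j) := by
  have havg := (hasSum_sum hc).mul_left (n : 𝕜)⁻¹
  have hfilter : (fun m => (n : 𝕜)⁻¹ * ∑ j ∈ range n, c m * (ω ^ j * z) ^ m)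
      = fun m => if n ∣ m then c m * z ^ m else 0 := by
    funext m
    have hfactor : ∑ j ∈ range n, c m * (ω ^ j * z) ^ m
        = c m * z ^ m * ∑ j ∈ range n, (ω ^ j) ^ m := by
      rw [Finset.mul_sum]
      exact Finset.sum_congr rfl fun j _ => by ring
    rw [hfactor, hω.sum_pow_pow_eq_ite m]
    split_ifs
    · field_simp
    · simp
  rw [hfilter] at havg
  have hinj : Function.Injective (n * ·) := mul_right_injective₀ hn
  have hsub := (hinj.hasSum_iff fun m hm => if_neg fun ⟨k, hk⟩ => hm ⟨k, hk.symm⟩).2 havg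
  refine hsub.congr_fun fun k => ?_
  simp

end RootsOfUnity

theorem norm_coeff_mul_pow_le_of_hasSum {a : ℕ → ℂ} {f : ℂ → ℂ} {R M : ℝ} (hR : 0 < R)
    (hM : 0 < M) (hfM : ∀ w ∈ ball (0 : ℂ) R, ‖f w‖ ≤ M)
    (ha : ∀ z ∈ ball (0 : ℂ) R, HasSum (fun n => a n * z ^ n) (f z)) {n : ℕ} (hn : n ≠ 0) :
    ‖a n‖ * R ^ n ≤ M - ‖a 0‖ ^ 2 / M := by
  set G : ℂ → ℂ := fun w => ∑' k, a (n * k) * w ^ k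
  -- `G (zⁿ)` is the mean of the values `f (ωʲ z)`, hence bounded by `M`
  have hG : ∀ w ∈ ball (0 : ℂ) (R ^ n),
      HasSum (fun k => a (n * k) * w ^ k) (G w) ∧ ‖G w‖ ≤ M := by
    intro w hw
    obtain ⟨z, rfl⟩ := IsAlgClosed.exists_pow_nat_eq w (Nat.pos_of_ne_zero hn)
    have hz : ‖z‖ < R := by
      rw [mem_ball_zero_iff, norm_pow] at hw
      exact (pow_lt_pow_iff_left₀ (norm_nonneg _) hR.le hn).1 hw
    obtain ⟨ω, hω⟩ : ∃ ω : ℂ, IsPrimitiveRoot ω n := ⟨_, Complex.isPrimitiveRoot_exp n hn⟩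
    have hmem : ∀ j, ω ^ j * z ∈ ball 0 R := fun j => by
      simpa [norm_mul, hω.norm'_eq_one hn] using hz
    have hsum := hasSum_nat_mul_of_isPrimitiveRoot hω hn fun j _ => ha _ (hmem j)
    simp_rw [pow_mul] at hsum
    rw [show G (z ^ n) = _ from hsum.tsum_eq]
    refine ⟨hsum, ?_⟩
    calc ‖(n : ℂ)⁻¹ * ∑ j ∈ range n, f (ω ^ j * z)‖
        ≤ (n : ℝ)⁻¹ * ∑ _j ∈ range n, M := by
          rw [norm_mul, norm_inv, norm_natCast]
          gcongr
          exact (norm_sum_le _ _).trans (sum_le_sum fun j _ => hfM _ (hmem j))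
      _ = M := by simp [hn]
  have hRn : 0 < R ^ n := pow_pos hR n
  have hGM : ∀ w ∈ ball (0 : ℂ) (R ^ n), HasSum (fun k => a (n * k) / M * w ^ k) (G w / M) :=
    fun w hw => by simpa only [mul_div_right_comm] using (hG w hw).1.div_const (M : ℂ)
  have hmaps : MapsTo (G · / M) (ball 0 (R ^ n)) (closedBall 0 1) := fun w hw => by
    simpa [norm_div, abs_of_pos hM, div_le_one hM] using (hG w hw).2
  have hpick := norm_deriv_mul_le_one_sub_sq hRn (differentiableOn_of_hasSum hRn hGM) hmaps
  rw [deriv_zero_eq_of_hasSum hRn hGM, eq_of_hasSum_mul_zero_pow (hGM 0 (mem_ball_self hRn))]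
    at hpick
  simp only [mul_one, mul_zero, norm_div, norm_real, Real.norm_of_nonneg hM.le] at hpick
  rw [div_mul_eq_mul_div, div_le_iff₀ hM] at hpick
  calc ‖a n‖ * R ^ n ≤ (1 - (‖a 0‖ / M) ^ 2) * M := hpick
    _ = M - ‖a 0‖ ^ 2 / M := by field_simp

theorem summable_and_tsum_norm_mul_pow_le {a : ℕ → ℂ} {f : ℂ → ℂ} {R M : ℝ} (hR : 0 < R)
    (hM : 0 < M) (hfM : ∀ w ∈ ball (0 : ℂ) R, ‖f w‖ ≤ M)
    (ha : ∀ z ∈ ball (0 : ℂ) R, HasSum (fun n => a n * z ^ n) (f z)) {z : ℂ}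
    (hz : ‖z‖ ≤ R / 3) :
    Summable (fun n => ‖a n‖ * ‖z‖ ^ n) ∧ ∑' n, ‖a n‖ * ‖z‖ ^ n ≤ M := by
  set K := M - ‖a 0‖ ^ 2 / M
  have ha0 : ‖a 0‖ ≤ M := by
    simpa [eq_of_hasSum_mul_zero_pow (ha 0 (mem_ball_self hR))] using hfM 0 (mem_ball_self hR)
  have hK0 : 0 ≤ K := by
    rw [sub_nonneg, div_le_iff₀ hM]
    nlinarith [norm_nonneg (a 0)]
  have hzR : ‖z‖ / R ≤ 1 / 3 := by rw [div_le_iff₀ hR]; linarith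
  have htail : ∀ n, ‖a (n + 1)‖ * ‖z‖ ^ (n + 1) ≤ K / 3 * (1 / 3) ^ n := fun n => calc
    ‖a (n + 1)‖ * ‖z‖ ^ (n + 1) = ‖a (n + 1)‖ * R ^ (n + 1) * (‖z‖ / R) ^ (n + 1) := by
        rw [div_pow, mul_assoc, mul_div_cancel₀ _ (pow_ne_zero _ hR.ne')]
    _ ≤ K * (1 / 3) ^ (n + 1) :=
        mul_le_mul (norm_coeff_mul_pow_le_of_hasSum hR hM hfM ha n.succ_ne_zero)
          (pow_le_pow_left₀ (by positivity) hzR _) (by positivity) hK0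
    _ = K / 3 * (1 / 3) ^ n := by ring
  have hgeo : HasSum (fun n : ℕ => K / 3 * (1 / 3 : ℝ) ^ n) (K / 2) := by
    rw [show K / 2 = K / 3 * (1 - 1 / 3)⁻¹ by ring]
    exact (hasSum_geometric_of_lt_one (by norm_num) (by norm_num)).mul_left (K / 3)
  have htail_sum : Summable fun n => ‖a (n + 1)‖ * ‖z‖ ^ (n + 1) :=
    hgeo.summable.of_nonneg_of_le (fun n => by positivity) htail
  have hsum := (summable_nat_add_iff (f := fun n => ‖a n‖ * ‖z‖ ^ n) 1).1 htail_sum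
  refine ⟨hsum, ?_⟩
  rw [hsum.tsum_eq_zero_add, pow_zero, mul_one]
  have hK : ‖a 0‖ + K / 2 = M - (M - ‖a 0‖) ^ 2 / (2 * M) := by
    simp only [K]
    field_simp
    ring
  calc ‖a 0‖ + ∑' n, ‖a (n + 1)‖ * ‖z‖ ^ (n + 1) ≤ ‖a 0‖ + K / 2 := by
        gcongr
        exact hasSum_le htail htail_sum.hasSum hgeo
    _ ≤ M := by
        rw [hK]
        linarith [show 0 ≤ (M - ‖a 0‖) ^ 2 / (2 * M) by positivity]

theorem stmt_0_general (R : ℝ) (hR : 0 < R) (f : ℂ → ℂ) (a : ℕ → ℂ)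
    (hbd : BddAbove ((fun w => ‖f w‖) '' ball (0 : ℂ) R))
    (ha : ∀ z ∈ ball (0 : ℂ) R, HasSum (fun n => a n * z ^ n) (f z))
    (z : ℂ) (hz : ‖z‖ ≤ R / 3) :
    Summable (fun n => ‖a n‖ * ‖z‖ ^ n) ∧
      ∑' n, ‖a n‖ * ‖z‖ ^ n ≤ sSup ((fun w => ‖f w‖) '' ball (0 : ℂ) R) := by
  set M := sSup ((fun w => ‖f w‖) '' ball (0 : ℂ) R)
  have hfM : ∀ w ∈ ball (0 : ℂ) R, ‖f w‖ ≤ M := fun w hw => le_csSup hbd ⟨w, hw, rfl⟩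
  have hM : 0 ≤ M := (norm_nonneg _).trans (hfM 0 (mem_ball_self hR))
  -- `M` itself may vanish, so apply the bound with `M + ε`
  have hbohr : ∀ ε > 0, Summable (fun n => ‖a n‖ * ‖z‖ ^ n) ∧ ∑' n, ‖a n‖ * ‖z‖ ^ n ≤ M + ε :=
    fun ε hε => summable_and_tsum_norm_mul_pow_le hR (by positivity)
      (fun w hw => (hfM w hw).trans (le_add_of_nonneg_right hε.le)) ha hz
  exact ⟨(hbohr 1 one_pos).1, le_of_forall_pos_le_add fun ε hε => (hbohr ε hε).2⟩

/-- **Generalized Bohr inequality.** If `f` is a bounded holomorphic function on the open disk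
`D_R = {z : |z| < R}` with power series expansion `f z = ∑ aₙ zⁿ`, then for every `z` with
`|z| ≤ R / 3`, the majorant series converges and `∑ |aₙ| |z|ⁿ ≤ sup_{w ∈ D_R} |f w|`. -/
theorem stmt_0 (R : ℝ) (hR : 0 < R) (f : ℂ → ℂ) (a : ℕ → ℂ)
    (hf : DifferentiableOn ℂ f (ball (0 : ℂ) R))
    (hbd : BddAbove ((fun w => ‖f w‖) '' ball (0 : ℂ) R))
    (ha : ∀ z ∈ ball (0 : ℂ) R, HasSum (fun n => a n * z ^ n) (f z))
    (z : ℂ) (hz : ‖z‖ ≤ R / 3) :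
    Summable (fun n => ‖a n‖ * ‖z‖ ^ n) ∧
      ∑' n, ‖a n‖ * ‖z‖ ^ n ≤ sSup ((fun w => ‖f w‖) '' ball (0 : ℂ) R) :=
  stmt_0_general R hR f a hbd ha z hz
end

section
/- Failure of the von Neumann inequality above the Bohr radius: Let R > 0 and let r satisfy R/3 < r < R. Then there exists a bounded holomorphic function f on the open disk D_R = {z ∈ ℂ : |z| < R}, with power series expansion f(z) = ∑_{n=0}^∞ a_n z^n, such that the operator r·M_z on ℓ¹(ℂ) (which has operator norm r) satisfies ‖∑_{n=0}^∞ a_n r^n M_z^n‖ = ∑_{n=0}^∞ |a_n| r^n > sup_{w ∈ D_R} |f(w)|, where the operator series converges absolutely in operator norm. -/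
/-!
The witness is the disc automorphism `f z = (t - z/R) / (1 - t z/R)` for a suitable `0 ≤ t < 1`:
it is bounded by `1` on `D_R`, and its coefficients are `a₀ = t`, `aₙ₊₁ = -(1 - t²) tⁿ / Rⁿ⁺¹`, so
with `ρ = r / R` one gets `∑ |aₙ| rⁿ = t + (1 - t²) ρ / (1 - t ρ)`, which exceeds `1` exactly when
`(1 + 2t) ρ > 1`; such a `t < 1` exists because `ρ > 1/3`.

On the operator side, `M_z` is an isometry of `ℓ¹` with `M_zⁿ e₀ = eₙ`. Hence `‖∑ bₙ M_zⁿ‖ ≤ ∑ |bₙ|`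
termwise, while `(∑ bₙ M_zⁿ) e₀ = (bₙ)ₙ` has norm `∑ |bₙ|`, which gives the reverse inequality.
-/

open Metric
open scoped lp

lemma lp.norm_eq_tsum_norm {α E : Type*} [NormedAddCommGroup E] (f : ℓ¹(α, E)) :
    ‖f‖ = ∑' i, ‖f i‖ := by
  simpa using lp.norm_eq_tsum_rpow (by norm_num) f

lemma lp.summable_norm {α E : Type*} [NormedAddCommGroup E] (f : ℓ¹(α, E)) :
    Summable fun i => ‖f i‖ := by
  simpa using (lp.memℓp f).summable (by norm_num)

section ForwardShift

variable {Mz : ℓ¹(ℕ, ℂ) →L[ℂ] ℓ¹(ℕ, ℂ)}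
  (hMz : ∀ x : ℓ¹(ℕ, ℂ), Mz x 0 = 0 ∧ ∀ n : ℕ, Mz x (n + 1) = x n)
include hMz

lemma norm_shift_apply (x : ℓ¹(ℕ, ℂ)) : ‖Mz x‖ = ‖x‖ := by
  rw [lp.norm_eq_tsum_norm, lp.norm_eq_tsum_norm, (lp.summable_norm (Mz x)).tsum_eq_zero_add]
  simp [hMz x]

lemma norm_shift_pow_apply (k : ℕ) (x : ℓ¹(ℕ, ℂ)) : ‖(Mz ^ k) x‖ = ‖x‖ := by
  induction k with
  | zero => simp
  | succ k ih => rw [pow_succ', mul_apply_eq_comp, norm_shift_apply hMz, ih]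

lemma norm_shift_pow_le_one (k : ℕ) : ‖Mz ^ k‖ ≤ 1 :=
  ContinuousLinearMap.opNorm_le_bound _ zero_le_one fun x => by
    rw [norm_shift_pow_apply hMz, one_mul]

lemma norm_shift : ‖Mz‖ = 1 := by
  refine le_antisymm (by simpa using norm_shift_pow_le_one hMz 1) ?_
  simpa [norm_shift_apply hMz, lp.norm_single] using Mz.le_opNorm (lp.single 1 0 (1 : ℂ))

lemma shift_pow_single_zero (k : ℕ) (c : ℂ) :
    (Mz ^ k) (lp.single 1 0 c) = lp.single 1 k c := by
  induction k with
  | zero => simp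
  | succ k ih =>
    ext (_ | n)
    · simp [pow_succ', mul_apply_eq_comp, (hMz _).1, lp.single_apply]
    · simp [pow_succ', mul_apply_eq_comp, (hMz _).2, ih, lp.single_apply, Pi.single_apply]

lemma norm_smul_shift_pow_le (c : ℂ) (n : ℕ) : ‖c • Mz ^ n‖ ≤ ‖c‖ := by
  simpa [norm_smul] using mul_le_mul_of_nonneg_left (norm_shift_pow_le_one hMz n) (norm_nonneg c)

variable {b : ℕ → ℂ} (hb : Summable fun n => ‖b n‖)
include hb

lemma summable_norm_smul_shift_pow : Summable fun n => ‖b n • Mz ^ n‖ :=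
  hb.of_nonneg_of_le (fun _ => norm_nonneg _) fun n => norm_smul_shift_pow_le hMz (b n) n

lemma tsum_smul_shift_pow_apply_single_zero :
    ⇑((∑' n, b n • Mz ^ n) (lp.single 1 0 (1 : ℂ))) = b := by
  let v : ℓ¹(ℕ, ℂ) := ⟨b, memℓp_gen (by simpa using hb)⟩
  have hterms : HasSum (fun n => (b n • Mz ^ n) (lp.single 1 0 (1 : ℂ))) v := by
    convert lp.hasSum_single ENNReal.one_ne_top v using 2 with n
    rw [smul_apply, shift_pow_single_zero hMz, ← lp.single_smul, smul_eq_mul, mul_one]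
  have htsum := (summable_norm_smul_shift_pow hMz hb).of_norm.hasSum.mapL
    (ContinuousLinearMap.apply ℂ _ (lp.single 1 0 (1 : ℂ)))
  exact congrArg Subtype.val (htsum.unique hterms)

lemma norm_tsum_smul_shift_pow : ‖∑' n, b n • Mz ^ n‖ = ∑' n, ‖b n‖ := by
  have hsum := summable_norm_smul_shift_pow hMz hb
  refine le_antisymm ((norm_tsum_le_tsum_norm hsum).trans ?_) ?_
  · exact hsum.tsum_le_tsum (fun n => norm_smul_shift_pow_le hMz (b n) n) hb
  · calc ∑' n, ‖b n‖ = ‖(∑' n, b n • Mz ^ n) (lp.single 1 0 (1 : ℂ))‖ := by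
          rw [lp.norm_eq_tsum_norm, tsum_smul_shift_pow_apply_single_zero hMz hb]
      _ ≤ ‖∑' n, b n • Mz ^ n‖ := by
          simpa [lp.norm_single] using (∑' n, b n • Mz ^ n).le_opNorm (lp.single 1 0 (1 : ℂ))

end ForwardShift

noncomputable def mobius (t : ℝ) (w : ℂ) : ℂ := (t - w) / (1 - t * w)

def mobiusCoeff (t : ℝ) : ℕ → ℝ
  | 0 => t
  | n + 1 => -(1 - t ^ 2) * t ^ n

lemma mobiusCoeff_zero (t : ℝ) : mobiusCoeff t 0 = t := rfl

lemma mobiusCoeff_succ (t : ℝ) (n : ℕ) :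
    mobiusCoeff t (n + 1) = -(1 - t ^ 2) * t ^ n := rfl

lemma norm_one_sub_mul_sq_sub_norm_sub_sq (t : ℝ) (w : ℂ) :
    ‖1 - t * w‖ ^ 2 - ‖t - w‖ ^ 2 = (1 - t ^ 2) * (1 - ‖w‖ ^ 2) := by
  simp only [Complex.sq_norm, Complex.normSq_apply, Complex.sub_re, Complex.sub_im,
    Complex.mul_re, Complex.mul_im, Complex.ofReal_re, Complex.ofReal_im, Complex.one_re,
    Complex.one_im]
  ring

section Mobius

variable {t : ℝ} {w : ℂ}

lemma norm_ofReal_mul_lt_one (ht : |t| < 1) (hw : ‖w‖ < 1) : ‖(t : ℂ) * w‖ < 1 := by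
  rw [norm_mul, Complex.norm_real, Real.norm_eq_abs]
  nlinarith [abs_nonneg t, norm_nonneg w]

lemma one_sub_ofReal_mul_ne_zero (ht : |t| < 1) (hw : ‖w‖ < 1) : 1 - (t : ℂ) * w ≠ 0 :=
  sub_ne_zero.2 fun h => (norm_ofReal_mul_lt_one ht hw).ne (by rw [← h, norm_one])

lemma norm_mobius_le_one (ht : |t| < 1) (hw : ‖w‖ < 1) : ‖mobius t w‖ ≤ 1 := by
  rw [mobius, norm_div, div_le_one (norm_pos_iff.2 (one_sub_ofReal_mul_ne_zero ht hw))]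
  have hsq := norm_one_sub_mul_sq_sub_norm_sub_sq t w
  have hfactor : 0 ≤ (1 - t ^ 2) * (1 - ‖w‖ ^ 2) :=
    mul_nonneg (by nlinarith [sq_abs t, abs_nonneg t]) (by nlinarith [norm_nonneg w])
  exact (pow_le_pow_iff_left₀ (norm_nonneg _) (norm_nonneg _) two_ne_zero).1 (by linarith)

lemma differentiableOn_mobius (ht : |t| < 1) : DifferentiableOn ℂ (mobius t) (ball 0 1) := by
  refine fun w hw => (DifferentiableAt.div ?_ ?_ ?_).differentiableWithinAt
  · fun_prop
  · fun_prop
  · exact one_sub_ofReal_mul_ne_zero ht (mem_ball_zero_iff.1 hw)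

lemma hasSum_mobiusCoeff_mul_pow (ht : |t| < 1) (hw : ‖w‖ < 1) :
    HasSum (fun n => (mobiusCoeff t n : ℂ) * w ^ n) (mobius t w) := by
  have hterm : (fun n => (mobiusCoeff t (n + 1) : ℂ) * w ^ (n + 1)) =
      fun n => -(1 - (t : ℂ) ^ 2) * w * (t * w) ^ n := by
    ext n
    push_cast [mobiusCoeff_succ]
    ring
  have hrest :
      mobius t w - (mobiusCoeff t 0 : ℂ) * w ^ 0 = -(1 - (t : ℂ) ^ 2) * w * (1 - t * w)⁻¹ := by
    rw [mobiusCoeff_zero, mobius, pow_zero, mul_one]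
    field_simp [one_sub_ofReal_mul_ne_zero ht hw]
    ring
  refine (hasSum_nat_add_iff' 1).1 ?_
  rw [hterm, Finset.sum_range_one, hrest]
  exact (hasSum_geometric_of_norm_lt_one (norm_ofReal_mul_lt_one ht hw)).mul_left _

lemma hasSum_abs_mobiusCoeff_mul_pow {ρ : ℝ} (ht₀ : 0 ≤ t) (ht₁ : t ≤ 1) (hρ : 0 ≤ ρ)
    (htρ : t * ρ < 1) :
    HasSum (fun n => |mobiusCoeff t n| * ρ ^ n) (t + (1 - t ^ 2) * ρ / (1 - t * ρ)) := by
  have hterm : (fun n => |mobiusCoeff t (n + 1)| * ρ ^ (n + 1)) =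
      fun n => (1 - t ^ 2) * ρ * (t * ρ) ^ n := by
    ext n
    have hcoeff : 0 ≤ 1 - t ^ 2 := by nlinarith
    rw [mobiusCoeff_succ, abs_mul, abs_neg, abs_pow, abs_of_nonneg hcoeff, abs_of_nonneg ht₀]
    ring
  refine (hasSum_nat_add_iff' 1).1 ?_
  rw [hterm, Finset.sum_range_one, mobiusCoeff_zero, abs_of_nonneg ht₀, pow_zero, mul_one,
    add_sub_cancel_left, div_eq_mul_inv]
  exact (hasSum_geometric_of_lt_one (by positivity) htρ).mul_left _

end Mobius

lemma one_lt_add_mul_div_one_sub_mul {t ρ : ℝ} (ht₁ : t < 1) (htρ : t * ρ < 1)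
    (hgain : 1 < (1 + 2 * t) * ρ) : 1 < t + (1 - t ^ 2) * ρ / (1 - t * ρ) := by
  have hden : 0 < 1 - t * ρ := by linarith
  rw [← sub_pos, show t + (1 - t ^ 2) * ρ / (1 - t * ρ) - 1 =
      (1 - t) * ((1 + 2 * t) * ρ - 1) / (1 - t * ρ) by field_simp; ring]
  exact div_pos (mul_pos (by linarith) (by linarith)) hden

lemma exists_mobius_parameter {ρ : ℝ} (hρ₃ : 1 < 3 * ρ) (hρ₁ : ρ < 1) :
    ∃ t, 0 ≤ t ∧ t < 1 ∧ 1 < (1 + 2 * t) * ρ := by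
  have hρ₀ : 0 < ρ := by linarith
  obtain ⟨t, hρt, ht₁⟩ : ∃ t, (1 - ρ) / (2 * ρ) < t ∧ t < 1 :=
    exists_between ((div_lt_one (by positivity)).2 (by linarith))
  have h := (div_lt_iff₀ (by positivity)).1 hρt
  exact ⟨t, (div_nonneg (by linarith) (by positivity)).trans hρt.le, ht₁, by linarith⟩

lemma div_mem_ball_zero_one {R : ℝ} (hR : 0 < R) {z : ℂ} (hz : z ∈ ball (0 : ℂ) R) :
    z / R ∈ ball (0 : ℂ) 1 := by
  rw [mem_ball_zero_iff, norm_div, Complex.norm_real, Real.norm_eq_abs, abs_of_pos hR,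
    div_lt_one hR]
  exact mem_ball_zero_iff.1 hz

lemma exists_hasSum_norm_le_one_one_lt_tsum_norm_mul_pow {R r : ℝ} (hR : 0 < R)
    (hr₁ : R / 3 < r) (hr₂ : r < R) :
    ∃ (f : ℂ → ℂ) (a : ℕ → ℂ),
      DifferentiableOn ℂ f (ball (0 : ℂ) R) ∧
      (∀ z ∈ ball (0 : ℂ) R, ‖f z‖ ≤ 1) ∧
      (∀ z ∈ ball (0 : ℂ) R, HasSum (fun n => a n * z ^ n) (f z)) ∧
      Summable (fun n => ‖a n‖ * r ^ n) ∧
      1 < ∑' n, ‖a n‖ * r ^ n := by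
  set ρ := r / R
  have hρ₀ : 0 < ρ := div_pos (by linarith) hR
  have hρ₁ : ρ < 1 := (div_lt_one hR).2 hr₂
  obtain ⟨t, ht₀, ht₁, hgain⟩ :=
    exists_mobius_parameter (by rw [mul_div_assoc', lt_div_iff₀ hR]; linarith) hρ₁
  have ht : |t| < 1 := by rwa [abs_of_nonneg ht₀]
  have htρ : t * ρ < 1 := by nlinarith
  have hsum : HasSum (fun n => ‖(mobiusCoeff t n : ℂ) / R ^ n‖ * r ^ n)
      (t + (1 - t ^ 2) * ρ / (1 - t * ρ)) := by
    convert hasSum_abs_mobiusCoeff_mul_pow ht₀ ht₁.le hρ₀.le htρ using 2 with n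
    simp only [ρ, norm_div, norm_pow, Complex.norm_real, Real.norm_eq_abs, abs_of_pos hR, div_pow]
    ring
  refine ⟨fun z => mobius t (z / R), fun n => mobiusCoeff t n / R ^ n, ?_, fun z hz => ?_,
    fun z hz => ?_, hsum.summable, hsum.tsum_eq ▸ one_lt_add_mul_div_one_sub_mul ht₁ htρ hgain⟩
  · exact (differentiableOn_mobius ht).comp (by fun_prop) fun z hz => div_mem_ball_zero_one hR hz
  · exact norm_mobius_le_one ht (mem_ball_zero_iff.1 (div_mem_ball_zero_one hR hz))
  · simpa [div_pow, div_mul_eq_mul_div, mul_div_assoc] using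
      hasSum_mobiusCoeff_mul_pow ht (mem_ball_zero_iff.1 (div_mem_ball_zero_one hR hz))

/-- **Failure of the von Neumann inequality above the Bohr radius.** Let `R > 0` and
`R/3 < r < R`, and let `M_z` be the forward shift on `ℓ¹(ℂ)`. Then there is a bounded
holomorphic function `f` on `D_R`, with power series `f z = ∑ aₙ zⁿ`, such that the operator
`r • M_z` (of norm `r`) satisfies `‖∑ aₙ rⁿ M_zⁿ‖ = ∑ |aₙ| rⁿ > sup_{w ∈ D_R} |f w|`, the
operator series converging absolutely in operator norm. -/
theorem stmt_9 (R r : ℝ) (hR : 0 < R) (hr₁ : R / 3 < r) (hr₂ : r < R)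
    (Mz : lp (fun _ : ℕ => ℂ) 1 →L[ℂ] lp (fun _ : ℕ => ℂ) 1)
    (hMz : ∀ x : lp (fun _ : ℕ => ℂ) 1,
      Mz x 0 = 0 ∧ ∀ n : ℕ, Mz x (n + 1) = x n) :
    ‖(r : ℂ) • Mz‖ = r ∧
    ∃ (f : ℂ → ℂ) (a : ℕ → ℂ),
      DifferentiableOn ℂ f (ball (0 : ℂ) R) ∧
      BddAbove ((fun w => ‖f w‖) '' ball (0 : ℂ) R) ∧
      (∀ z ∈ ball (0 : ℂ) R, HasSum (fun n => a n * z ^ n) (f z)) ∧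
      Summable (fun n => ‖(a n * (r : ℂ) ^ n) • Mz ^ n‖) ∧
      ‖∑' n, (a n * (r : ℂ) ^ n) • Mz ^ n‖ = ∑' n, ‖a n‖ * r ^ n ∧
      sSup ((fun w => ‖f w‖) '' ball (0 : ℂ) R) < ∑' n, ‖a n‖ * r ^ n := by
  have hr : 0 < r := by linarith
  obtain ⟨f, a, hf, hf_le, hfa, ha, hone⟩ :=
    exists_hasSum_norm_le_one_one_lt_tsum_norm_mul_pow hR hr₁ hr₂
  have hnorm : ∀ n, ‖a n * (r : ℂ) ^ n‖ = ‖a n‖ * r ^ n := fun n => by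
    rw [norm_mul, norm_pow, Complex.norm_real, Real.norm_eq_abs, abs_of_pos hr]
  have ha' : Summable fun n => ‖a n * (r : ℂ) ^ n‖ := by simpa only [hnorm] using ha
  have hbound : ∀ y ∈ (fun w => ‖f w‖) '' ball (0 : ℂ) R, y ≤ 1 := by
    rintro _ ⟨z, hz, rfl⟩
    exact hf_le z hz
  refine ⟨by rw [norm_smul, norm_shift hMz, mul_one, Complex.norm_real, Real.norm_eq_abs,
    abs_of_pos hr], f, a, hf, ⟨1, hbound⟩, hfa, summable_norm_smul_shift_pow hMz ha',
    by simp_rw [norm_tsum_smul_shift_pow hMz ha', hnorm], ?_⟩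
  exact (Real.sSup_le hbound zero_le_one).trans_lt hone
end

section
/- Let X be a complex Banach space and let M̂_z be the backward shift operator on ℓ²(X), defined by M̂_z(a_0, a_1, a_2, …) = (a_1, a_2, a_3, …). If the closed unit disk D̄ = {z ∈ ℂ : |z| ≤ 1} is a spectral set for M̂_z — i.e. σ(M̂_z) ⊆ D̄ and ‖p(M̂_z) q(M̂_z)^{−1}‖ ≤ sup_{|z| ≤ 1} |p(z)/q(z)| for all complex polynomials p, q with q having no zeros in D̄ — then X satisfies the parallelogram law: ‖x + y‖² + ‖x − y‖² = 2(‖x‖² + ‖y‖²) for all x, y ∈ X; equivalently, X is a Hilbert space. -/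
/-!
For `0 < s < 1` the Blaschke factor `(z - s) / (1 - s z)` has modulus at most one on the closed
disk, so `‖(M̂_z - s) G‖ ≤ ‖(1 - s M̂_z) G‖` for every `G ∈ ℓ²(X)`. On `G = (0, u, z, s z, s² z, …)`
the left operator produces the finitely supported `(u, z - s u, 0, …)`, and the inequality reads
`(1 - s²)‖u‖² + ‖z - s u‖² ≤ ‖u - s z‖² + (1 - s²)‖z‖²`; exchanging `u` and `z` makes it an
equality. With `u = x + y`, `z = y - x` this says that `‖x + y‖² - ‖x - y‖²` is homogeneous in `y`
over `ℝ`. Hence `f t = ‖p + t q‖²` satisfies `f (η + ε) - f (η - ε) = ε (f (η + 1) - f (η - 1))`,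
which forces `f` to be a quadratic polynomial in `t`. Since `‖p + t q‖² = t² ‖q + t⁻¹ p‖²`, its
leading coefficient is `‖q‖²`, and `f 1 + f (-1) = 2 (‖p‖² + ‖q‖²)` is the parallelogram law.
-/

open Polynomial Metric

section SeqSpace
variable {𝕜 E : Type*} [NormedField 𝕜] [SeminormedAddCommGroup E] [NormedSpace 𝕜 E]

theorem memℓp_two_iff {ι : Type*} {F : ι → Type*} [∀ i, NormedAddCommGroup (F i)]
    {f : ∀ i, F i} : Memℓp f 2 ↔ Summable fun i => ‖f i‖ ^ 2 := by
  simpa using memℓp_gen_iff (p := 2) (by norm_num) (f := f)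

theorem lp.norm_sq_eq_tsum {ι : Type*} {F : ι → Type*} [∀ i, NormedAddCommGroup (F i)]
    (f : lp F 2) : ‖f‖ ^ 2 = ∑' i, ‖f i‖ ^ 2 := by
  simpa using lp.norm_rpow_eq_tsum (p := 2) (by norm_num) f

theorem hasSum_norm_sq_of_geometric_tail {f : ℕ → E} {r : 𝕜} (hr : ‖r‖ < 1) {w : E}
    (hf : ∀ k, f (k + 2) = r ^ k • w) :
    HasSum (fun n => ‖f n‖ ^ 2) (‖f 0‖ ^ 2 + ‖f 1‖ ^ 2 + ‖w‖ ^ 2 / (1 - ‖r‖ ^ 2)) := by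
  have hr2 : ‖r‖ ^ 2 < 1 := by nlinarith [norm_nonneg r]
  have htail : (fun k => ‖f (k + 2)‖ ^ 2) = fun k => ‖w‖ ^ 2 * (‖r‖ ^ 2) ^ k := by
    ext k
    rw [hf, norm_smul, norm_pow]
    ring
  rw [← hasSum_nat_add_iff' 2, htail]
  have hsum : ‖f 0‖ ^ 2 + ‖f 1‖ ^ 2 + ‖w‖ ^ 2 / (1 - ‖r‖ ^ 2) - ∑ i ∈ Finset.range 2, ‖f i‖ ^ 2 =
      ‖w‖ ^ 2 * (1 - ‖r‖ ^ 2)⁻¹ := by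
    simp [Finset.sum_range_succ, div_eq_mul_inv]
  rw [hsum]
  exact (hasSum_geometric_of_lt_one (by positivity) hr2).mul_left (‖w‖ ^ 2)

end SeqSpace

section VonNeumann
variable {A : Type*} [NormedRing A] [NormedAlgebra ℂ A]

def RationalVonNeumannIneq (T : A) : Prop :=
  ∀ p q : ℂ[X], (∀ z ∈ closedBall (0 : ℂ) 1, q.eval z ≠ 0) →
    IsUnit (aeval T q) ∧
      ‖aeval T p * Ring.inverse (aeval T q)‖ ≤
        sSup ((fun z => ‖p.eval z / q.eval z‖) '' closedBall (0 : ℂ) 1)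

theorem Complex.norm_sub_le_norm_one_sub_mul {s : ℝ} (hs : |s| ≤ 1) {w : ℂ} (hw : ‖w‖ ≤ 1) :
    ‖w - s‖ ≤ ‖1 - s * w‖ := by
  have hgap : ‖1 - s * w‖ ^ 2 - ‖w - s‖ ^ 2 = (1 - s ^ 2) * (1 - ‖w‖ ^ 2) := by
    simp only [Complex.sq_norm, Complex.normSq_apply, Complex.sub_re, Complex.sub_im,
      Complex.mul_re, Complex.mul_im, Complex.one_re, Complex.one_im, Complex.ofReal_re,
      Complex.ofReal_im]
    ring
  have hs2 : s ^ 2 ≤ 1 := sq_le_one_iff_abs_le_one s |>.2 hs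
  have hw2 : ‖w‖ ^ 2 ≤ 1 := pow_le_one₀ (norm_nonneg w) hw
  refine (pow_le_pow_iff_left₀ (norm_nonneg _) (norm_nonneg _) two_ne_zero).1 ?_
  nlinarith [mul_nonneg (sub_nonneg.2 hs2) (sub_nonneg.2 hw2)]

theorem RationalVonNeumannIneq.blaschke {T : A} (hT : RationalVonNeumannIneq T) {s : ℝ}
    (hs : |s| < 1) :
    IsUnit (aeval T (1 - C (s : ℂ) * X)) ∧
      ‖aeval T (X - C (s : ℂ)) * Ring.inverse (aeval T (1 - C (s : ℂ) * X))‖ ≤ 1 := by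
  have hne : ∀ w ∈ closedBall (0 : ℂ) 1, (1 - C (s : ℂ) * X).eval w ≠ 0 := by
    intro w hw h
    rw [mem_closedBall_zero_iff] at hw
    have : ‖(s : ℂ) * w‖ < 1 := by
      rw [norm_mul, Complex.norm_real, Real.norm_eq_abs]
      nlinarith [abs_nonneg s, norm_nonneg w]
    simp only [eval_sub, eval_one, eval_mul, eval_C, eval_X, sub_eq_zero] at h
    rw [← h, norm_one] at this
    exact lt_irrefl _ this
  obtain ⟨hunit, hnorm⟩ := hT (X - C (s : ℂ)) _ hne
  refine ⟨hunit, hnorm.trans (Real.sSup_le ?_ zero_le_one)⟩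
  rintro _ ⟨w, hw, rfl⟩
  have hw' := hne w hw
  simp only [eval_sub, eval_one, eval_mul, eval_C, eval_X] at hw' ⊢
  rw [norm_div, div_le_one (norm_pos_iff.2 hw')]
  exact Complex.norm_sub_le_norm_one_sub_mul hs.le (mem_closedBall_zero_iff.1 hw)

end VonNeumann

theorem ContinuousLinearMap.norm_apply_le_of_norm_mul_inverse_le_one {𝕜 E : Type*}
    [NontriviallyNormedField 𝕜] [NormedAddCommGroup E] [NormedSpace 𝕜 E] {P Q : E →L[𝕜] E}
    (hQ : IsUnit Q) (h : ‖P * Ring.inverse Q‖ ≤ 1) (v : E) : ‖P v‖ ≤ ‖Q v‖ := by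
  calc ‖P v‖ = ‖(P * Ring.inverse Q) (Q v)‖ := by
        rw [← mul_apply_eq_comp, mul_assoc, Ring.inverse_mul_cancel _ hQ, mul_one]
    _ ≤ ‖P * Ring.inverse Q‖ * ‖Q v‖ := le_opNorm _ _
    _ ≤ ‖Q v‖ := mul_le_of_le_one_left (norm_nonneg _) h

section BackwardShift
variable {E : Type*} [NormedAddCommGroup E] [NormedSpace ℂ E]

def geomTailSeq (u z : E) (r : ℂ) : ℕ → E
  | 0 => 0
  | 1 => u
  | k + 2 => r ^ k • z

theorem memℓp_geomTailSeq (u z : E) {r : ℂ} (hr : ‖r‖ < 1) : Memℓp (geomTailSeq u z r) 2 :=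
  memℓp_two_iff.2 (hasSum_norm_sq_of_geometric_tail hr fun _ => rfl).summable

variable {T : lp (fun _ : ℕ => E) 2 →L[ℂ] lp (fun _ : ℕ => E) 2}

theorem norm_sq_shift_sub_smul_apply_geomTailSeq (hT : ∀ x n, T x n = x (n + 1)) {u z : E}
    {σ : ℂ} {G : lp (fun _ : ℕ => E) 2} (hG : ⇑G = geomTailSeq u z σ) :
    ‖(T - σ • 1) G‖ ^ 2 = ‖u‖ ^ 2 + ‖z - σ • u‖ ^ 2 := by
  have hcoord : ∀ n, (T - σ • 1) G n = geomTailSeq u z σ (n + 1) - σ • geomTailSeq u z σ n := by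
    intro n
    simp only [sub_apply, smul_apply, one_apply_eq_self, lp.coeFn_sub, lp.coeFn_smul,
      Pi.sub_apply, Pi.smul_apply, hT, hG]
  have htail : ∀ k, (T - σ • 1) G (k + 2) = (0 : ℂ) ^ k • (0 : E) := by
    intro k
    rw [hcoord, smul_zero]
    simp only [geomTailSeq, pow_succ, mul_smul, smul_comm σ, sub_self]
  rw [lp.norm_sq_eq_tsum, (hasSum_norm_sq_of_geometric_tail (by simp) htail).tsum_eq,
    hcoord, hcoord]
  simp [geomTailSeq]

theorem norm_sq_one_sub_smul_shift_apply_geomTailSeq (hT : ∀ x n, T x n = x (n + 1)) {u z : E}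
    {s : ℝ} (hs : |s| < 1) {G : lp (fun _ : ℕ => E) 2} (hG : ⇑G = geomTailSeq u z s) :
    ‖(1 - (s : ℂ) • T) G‖ ^ 2 =
      s ^ 2 * ‖u‖ ^ 2 + ‖u - (s : ℂ) • z‖ ^ 2 + (1 - s ^ 2) * ‖z‖ ^ 2 := by
  have hcoord : ∀ n, (1 - (s : ℂ) • T) G n =
      geomTailSeq u z s n - (s : ℂ) • geomTailSeq u z s (n + 1) := by
    intro n
    simp only [sub_apply, smul_apply, one_apply_eq_self, lp.coeFn_sub, lp.coeFn_smul,
      Pi.sub_apply, Pi.smul_apply, hT, hG]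
  have htail : ∀ k, (1 - (s : ℂ) • T) G (k + 2) = (s : ℂ) ^ k • ((1 - (s : ℂ) ^ 2) • z) := by
    intro k
    rw [hcoord]
    simp only [geomTailSeq]
    match_scalars
    ring
  have hs' : ‖(s : ℂ)‖ < 1 := by rwa [Complex.norm_real, Real.norm_eq_abs]
  have hs2 : s ^ 2 < 1 := (sq_lt_one_iff_abs_lt_one s).2 hs
  rw [lp.norm_sq_eq_tsum, (hasSum_norm_sq_of_geometric_tail hs' htail).tsum_eq, hcoord, hcoord]
  have h1 : (1 - (s : ℂ) ^ 2) = ((1 - s ^ 2 : ℝ) : ℂ) := by push_cast; ring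
  simp only [geomTailSeq, norm_smul, h1, Complex.norm_real, Real.norm_eq_abs, sq_abs, norm_neg,
    zero_sub, abs_of_pos (sub_pos.2 hs2), pow_zero, one_smul]
  field_simp
  rw [sq_abs]
  ring

end BackwardShift

theorem RationalVonNeumannIneq.blaschke_ineq_of_backwardShift {E : Type*} [NormedAddCommGroup E]
    [NormedSpace ℂ E] {T : lp (fun _ : ℕ => E) 2 →L[ℂ] lp (fun _ : ℕ => E) 2}
    (hvN : RationalVonNeumannIneq T) (hT : ∀ x n, T x n = x (n + 1)) {s : ℝ} (hs : |s| < 1)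
    (u z : E) :
    (1 - s ^ 2) * ‖u‖ ^ 2 + ‖z - s • u‖ ^ 2 ≤ ‖u - s • z‖ ^ 2 + (1 - s ^ 2) * ‖z‖ ^ 2 := by
  obtain ⟨hunit, hnorm⟩ := hvN.blaschke hs
  have hs' : ‖(s : ℂ)‖ < 1 := by rwa [Complex.norm_real, Real.norm_eq_abs]
  let G : lp (fun _ : ℕ => E) 2 := ⟨geomTailSeq u z s, memℓp_geomTailSeq u z hs'⟩
  have hle := ContinuousLinearMap.norm_apply_le_of_norm_mul_inverse_le_one hunit hnorm G
  have hP : aeval T (X - C (s : ℂ)) = T - (s : ℂ) • 1 := by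
    simp [Algebra.algebraMap_eq_smul_one]
  have hQ : aeval T (1 - C (s : ℂ) * X) = 1 - (s : ℂ) • T := by
    simp [Algebra.algebraMap_eq_smul_one]
  rw [hP, hQ] at hle
  have hsq := pow_le_pow_left₀ (norm_nonneg _) hle 2
  rw [norm_sq_shift_sub_smul_apply_geomTailSeq hT rfl,
    norm_sq_one_sub_smul_shift_apply_geomTailSeq hT hs rfl] at hsq
  simp only [Complex.coe_smul] at hsq
  linarith

theorem exists_quadratic_of_sub_eq_mul {f : ℝ → ℝ}
    (hf : ∀ η ε, f (η + ε) - f (η - ε) = ε * (f (η + 1) - f (η - 1))) :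
    ∃ a b : ℝ, ∀ t, f t = f 0 + a * t + b * t ^ 2 := by
  -- exchanging the roles of `η` and `ε` shows that `η ↦ f (η + 1) - f (η - 1)` is affine
  have h_affine : ∀ η, f (η + 1) - f (η - 1) =
      (f 1 - f (-1)) + (f 2 - f 0 - f 1 + f (-1)) * η := by
    intro η
    have h₁ := hf 1 η
    have h₂ := hf 0 (1 - η)
    ring_nf at h₁ h₂ ⊢
    linarith
  refine ⟨(f 1 - f (-1)) / 2, (f 2 - f 0 - f 1 + f (-1)) / 4, fun t => ?_⟩
  have h := hf (t / 2) (t / 2)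
  rw [h_affine (t / 2)] at h
  ring_nf at h ⊢
  linarith

section Parallelogram

variable {E : Type*} [SeminormedAddCommGroup E] [NormedSpace ℝ E]

theorem polar_smul_right_of_blaschke_ineq_of_lt_one
    (hG : ∀ s : ℝ, 0 < s → s < 1 → ∀ u z : E,
      (1 - s ^ 2) * ‖u‖ ^ 2 + ‖z - s • u‖ ^ 2 ≤ ‖u - s • z‖ ^ 2 + (1 - s ^ 2) * ‖z‖ ^ 2)
    {t : ℝ} (ht₀ : 0 < t) (ht₁ : t < 1) (x y : E) :
    ‖x + t • y‖ ^ 2 - ‖x - t • y‖ ^ 2 = t * (‖x + y‖ ^ 2 - ‖x - y‖ ^ 2) := by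
  set s := (1 - t) / (1 + t)
  set c := 2 / (1 + t)
  have hs₀ : 0 < s := div_pos (by linarith) (by linarith)
  have hs₁ : s < 1 := (div_lt_one (by linarith)).2 (by linarith)
  have hc : 0 < c := div_pos two_pos (by linarith)
  have hsc : 1 - s ^ 2 = c ^ 2 * t := by simp only [s, c]; field_simp; ring
  have e₁ : (x + y) - s • (y - x) = c • (x + t • y) := by
    simp only [s, c]; match_scalars <;> field_simp <;> ring
  have e₂ : (y - x) - s • (x + y) = -(c • (x - t • y)) := by
    simp only [s, c]; match_scalars <;> field_simp <;> ring
  have h₁ := hG s hs₀ hs₁ (x + y) (y - x)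
  have h₂ := hG s hs₀ hs₁ (y - x) (x + y)
  rw [e₁, e₂, norm_neg, norm_smul, norm_smul, Real.norm_of_nonneg hc.le, norm_sub_rev y x,
    hsc] at h₁ h₂
  have h : c ^ 2 * (‖x + t • y‖ ^ 2 - ‖x - t • y‖ ^ 2 - t * (‖x + y‖ ^ 2 - ‖x - y‖ ^ 2)) = 0 := by
    nlinarith
  simpa [hc.ne', sub_eq_zero] using h

theorem polar_smul_right_of_blaschke_ineq
    (hG : ∀ s : ℝ, 0 < s → s < 1 → ∀ u z : E,
      (1 - s ^ 2) * ‖u‖ ^ 2 + ‖z - s • u‖ ^ 2 ≤ ‖u - s • z‖ ^ 2 + (1 - s ^ 2) * ‖z‖ ^ 2)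
    (t : ℝ) (x y : E) :
    ‖x + t • y‖ ^ 2 - ‖x - t • y‖ ^ 2 = t * (‖x + y‖ ^ 2 - ‖x - y‖ ^ 2) := by
  have pos : ∀ t : ℝ, 0 < t → ∀ x y : E,
      ‖x + t • y‖ ^ 2 - ‖x - t • y‖ ^ 2 = t * (‖x + y‖ ^ 2 - ‖x - y‖ ^ 2) := by
    intro t ht x y
    rcases lt_trichotomy t 1 with ht₁ | rfl | ht₁
    · exact polar_smul_right_of_blaschke_ineq_of_lt_one hG ht ht₁ x y
    · simp
    · have h := polar_smul_right_of_blaschke_ineq_of_lt_one hG (inv_pos.2 ht)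
        (inv_lt_one_of_one_lt₀ ht₁) x (t • y)
      rw [inv_smul_smul₀ ht.ne'] at h
      rw [h, ← mul_assoc, mul_inv_cancel₀ ht.ne', one_mul]
  rcases lt_trichotomy t 0 with ht | rfl | ht
  · have h := pos (-t) (neg_pos.2 ht) x y
    rw [neg_smul, sub_neg_eq_add, ← sub_eq_add_neg] at h
    linarith
  · simp
  · exact pos t ht x y

theorem exists_norm_add_smul_sq_eq_quadratic
    (h : ∀ (t : ℝ) (x y : E), ‖x + t • y‖ ^ 2 - ‖x - t • y‖ ^ 2 = t * (‖x + y‖ ^ 2 - ‖x - y‖ ^ 2))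
    (p q : E) : ∃ a b : ℝ, ∀ t : ℝ, ‖p + t • q‖ ^ 2 = ‖p‖ ^ 2 + a * t + b * t ^ 2 := by
  have hf : ∀ η ε : ℝ, ‖p + (η + ε) • q‖ ^ 2 - ‖p + (η - ε) • q‖ ^ 2 =
      ε * (‖p + (η + 1) • q‖ ^ 2 - ‖p + (η - 1) • q‖ ^ 2) := by
    intro η ε
    simpa only [add_smul, sub_smul, one_smul, ← add_assoc, add_sub_assoc]
      using h ε (p + η • q) q
  obtain ⟨a, b, hab⟩ := exists_quadratic_of_sub_eq_mul (f := fun t : ℝ => ‖p + t • q‖ ^ 2) hf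
  exact ⟨a, b, fun t => by simpa using hab t⟩

theorem parallelogram_of_polar_smul_right
    (h : ∀ (t : ℝ) (x y : E), ‖x + t • y‖ ^ 2 - ‖x - t • y‖ ^ 2 = t * (‖x + y‖ ^ 2 - ‖x - y‖ ^ 2))
    (x y : E) : ‖x + y‖ ^ 2 + ‖x - y‖ ^ 2 = 2 * (‖x‖ ^ 2 + ‖y‖ ^ 2) := by
  obtain ⟨a, b, hxy⟩ := exists_norm_add_smul_sq_eq_quadratic h x y
  obtain ⟨a', b', hyx⟩ := exists_norm_add_smul_sq_eq_quadratic h y x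
  have e₁ : x + (1 : ℝ) • y = y + (1 : ℝ) • x := by module
  have e₂ : ‖x + (-1 : ℝ) • y‖ = ‖y + (-1 : ℝ) • x‖ := by
    rw [← norm_neg]; congr 1; module
  have e₃ : ‖x + (2 : ℝ) • y‖ = 2 * ‖y + (2⁻¹ : ℝ) • x‖ := by
    rw [show x + (2 : ℝ) • y = (2 : ℝ) • (y + (2⁻¹ : ℝ) • x) by module, norm_smul, Real.norm_two]
  have h₁ := hxy 1
  have h₂ := hxy (-1)
  have h₃ := hxy 2
  rw [e₁, hyx] at h₁
  rw [e₂, hyx] at h₂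
  rw [e₃, mul_pow, hyx] at h₃
  have hb : b = ‖y‖ ^ 2 := by nlinarith
  rw [show x + y = x + (1 : ℝ) • y by module, show x - y = x + (-1 : ℝ) • y by module, hxy, hxy,
    hb]
  ring

end Parallelogram

theorem stmt_12_general (X : Type) [NormedAddCommGroup X] [NormedSpace ℂ X]
    (Mz : lp (fun _ : ℕ => X) 2 →L[ℂ] lp (fun _ : ℕ => X) 2)
    (hMz : ∀ (x : lp (fun _ : ℕ => X) 2) (n : ℕ), Mz x n = x (n + 1))
    (hvN : ∀ p q : ℂ[X], (∀ z ∈ closedBall (0 : ℂ) 1, q.eval z ≠ 0) →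
      IsUnit (aeval Mz q) ∧
      ‖aeval Mz p * Ring.inverse (aeval Mz q)‖ ≤
        sSup ((fun z => ‖p.eval z / q.eval z‖) '' closedBall (0 : ℂ) 1)) :
    (∀ x y : X, ‖x + y‖ ^ 2 + ‖x - y‖ ^ 2 = 2 * (‖x‖ ^ 2 + ‖y‖ ^ 2)) ∧
      Nonempty (InnerProductSpace ℂ X) := by
  have hblaschke : ∀ s : ℝ, 0 < s → s < 1 → ∀ u z : X,
      (1 - s ^ 2) * ‖u‖ ^ 2 + ‖z - s • u‖ ^ 2 ≤ ‖u - s • z‖ ^ 2 + (1 - s ^ 2) * ‖z‖ ^ 2 :=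
    fun s hs₀ hs₁ => RationalVonNeumannIneq.blaschke_ineq_of_backwardShift (T := Mz) hvN hMz
      (abs_lt.2 ⟨by linarith, hs₁⟩)
  have hpar := parallelogram_of_polar_smul_right (polar_smul_right_of_blaschke_ineq hblaschke)
  exact ⟨hpar, ⟨InnerProductSpace.ofNorm ℂ fun x y => by simpa only [sq] using hpar x y⟩⟩

/-- If `X` is a complex Banach space and the closed unit disk is a spectral set for the
backward shift `M̂_z (a₀, a₁, a₂, …) = (a₁, a₂, a₃, …)` on `ℓ²(X)`, then the norm of `X`
satisfies the parallelogram law; equivalently, `X` is a Hilbert space. -/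
theorem stmt_12 (X : Type) [NormedAddCommGroup X] [NormedSpace ℂ X] [CompleteSpace X]
    (Mz : lp (fun _ : ℕ => X) 2 →L[ℂ] lp (fun _ : ℕ => X) 2)
    (hMz : ∀ (x : lp (fun _ : ℕ => X) 2) (n : ℕ), Mz x n = x (n + 1))
    (hspec : spectrum ℂ Mz ⊆ closedBall (0 : ℂ) 1)
    (hvN : ∀ p q : ℂ[X], (∀ z ∈ closedBall (0 : ℂ) 1, q.eval z ≠ 0) →
      IsUnit (aeval Mz q) ∧
      ‖aeval Mz p * Ring.inverse (aeval Mz q)‖ ≤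
        sSup ((fun z => ‖p.eval z / q.eval z‖) '' closedBall (0 : ℂ) 1)) :
    (∀ x y : X, ‖x + y‖ ^ 2 + ‖x - y‖ ^ 2 = 2 * (‖x‖ ^ 2 + ‖y‖ ^ 2)) ∧
      Nonempty (InnerProductSpace ℂ X) :=
  stmt_12_general X Mz hMz hvN
end

section
/- Let X be a complex Banach space and let M_z be the forward shift operator on ℓ²(X), defined by M_z(a_0, a_1, a_2, …) = (0, a_0, a_1, …). If the closed unit disk D̄ = {z ∈ ℂ : |z| ≤ 1} is a spectral set for M_z — i.e. σ(M_z) ⊆ D̄ and ‖p(M_z) q(M_z)^{−1}‖ ≤ sup_{|z| ≤ 1} |p(z)/q(z)| for all complex polynomials p, q with q having no zeros in D̄ — then X satisfies the parallelogram law: ‖x + y‖² + ‖x − y‖² = 2(‖x‖² + ‖y‖²) for all x, y ∈ X; equivalently, X is a Hilbert space. -/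
/-!
For real `a` with `|a| < 1` the Möbius map `z ↦ (a - z) / (1 - a z)` sends the closed disk into
itself, so the spectral-set hypothesis gives `‖(a - M_z) w‖ ≤ ‖(1 - a M_z) w‖`. Testing this on
`w = (x, y, 0, 0, …)` and on `(y, x, 0, 0, …)` turns it into the identity
`‖x - a y‖² - ‖y - a x‖² = (1 - a²) (‖x‖² - ‖y‖²)`. For `a = 1/2` and `x = 2(u + v)`,
`y = 2(u - v)` this says `‖u + 3v‖² - ‖u - 3v‖² = 3 (‖u + v‖² - ‖u - v‖²)`, which forces the
second difference `‖x + y‖² + ‖x - y‖² - 2‖x‖²` to scale by `4` when `y` is doubled. Comparing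
this scaling for the pairs `(x, y)` and `(y, x/2)` gives the parallelogram law.
-/

open Polynomial Metric

theorem Complex.norm_ofReal_sub_le_norm_one_sub_ofReal_mul {a : ℝ} (ha : |a| ≤ 1) {z : ℂ}
    (hz : ‖z‖ ≤ 1) : ‖(a : ℂ) - z‖ ≤ ‖1 - a * z‖ := by
  have hz2 : ‖z‖ ^ 2 ≤ 1 := pow_le_one₀ (norm_nonneg z) hz
  have ha2 : a ^ 2 ≤ 1 := by rwa [← sq_abs, sq_le_one_iff₀ (abs_nonneg a)]
  rw [← sq_le_sq₀ (norm_nonneg _) (norm_nonneg _)]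
  simp only [Complex.sq_norm, Complex.normSq_apply, Complex.sub_re, Complex.sub_im,
    Complex.mul_re, Complex.mul_im, Complex.ofReal_re, Complex.ofReal_im, Complex.one_re,
    Complex.one_im] at hz2 ⊢
  -- `‖1 - a z‖² - ‖a - z‖² = (1 - a²) (1 - ‖z‖²)`
  nlinarith [mul_nonneg (sub_nonneg.2 ha2) (sub_nonneg.2 hz2)]

section SpectralSet

variable {E : Type*} [NormedAddCommGroup E] [NormedSpace ℂ E] {T : E →L[ℂ] E}

theorem norm_aeval_apply_le {p q : ℂ[X]} {M : ℝ} (hq : IsUnit (aeval T q))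
    (hpq : ‖aeval T p * Ring.inverse (aeval T q)‖ ≤ M) (w : E) :
    ‖aeval T p w‖ ≤ M * ‖aeval T q w‖ :=
  calc ‖aeval T p w‖ = ‖(aeval T p * Ring.inverse (aeval T q)) (aeval T q w)‖ := by
        rw [← mul_apply_eq_comp, mul_assoc, Ring.inverse_mul_cancel _ hq, mul_one]
    _ ≤ ‖aeval T p * Ring.inverse (aeval T q)‖ * ‖aeval T q w‖ :=
        ContinuousLinearMap.le_opNorm _ _
    _ ≤ M * ‖aeval T q w‖ := by gcongr

theorem norm_ofReal_smul_sub_le_of_closedBall_spectralSet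
    (hT : ∀ p q : ℂ[X], (∀ z ∈ closedBall (0 : ℂ) 1, q.eval z ≠ 0) →
      IsUnit (aeval T q) ∧
      ‖aeval T p * Ring.inverse (aeval T q)‖ ≤
        sSup ((fun z => ‖p.eval z / q.eval z‖) '' closedBall (0 : ℂ) 1))
    {a : ℝ} (ha : |a| < 1) (w : E) : ‖(a : ℂ) • w - T w‖ ≤ ‖w - (a : ℂ) • T w‖ := by
  have hq : ∀ z ∈ closedBall (0 : ℂ) 1, (1 - C (a : ℂ) * X).eval z ≠ 0 := by
    intro z hz h
    have : ‖(a : ℂ) * z‖ < 1 := by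
      rw [norm_mul, Complex.norm_real, Real.norm_eq_abs]
      exact mul_lt_one_of_nonneg_of_lt_one_left (abs_nonneg a) ha (mem_closedBall_zero_iff.1 hz)
    simp only [eval_sub, eval_one, eval_mul, eval_C, eval_X] at h
    rw [← sub_eq_zero.1 h, norm_one] at this
    exact lt_irrefl _ this
  have hsup : sSup ((fun z => ‖(C (a : ℂ) - X).eval z / (1 - C (a : ℂ) * X).eval z‖) ''
      closedBall (0 : ℂ) 1) ≤ 1 := by
    refine Real.sSup_le ?_ zero_le_one
    rintro r ⟨z, hz, rfl⟩
    simp only [eval_sub, eval_one, eval_mul, eval_C, eval_X, norm_div]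
    exact div_le_one_of_le₀ (Complex.norm_ofReal_sub_le_norm_one_sub_ofReal_mul ha.le
      (mem_closedBall_zero_iff.1 hz)) (norm_nonneg _)
  obtain ⟨hunit, hnorm⟩ := hT (C (a : ℂ) - X) (1 - C (a : ℂ) * X) hq
  simpa using norm_aeval_apply_le hunit (hnorm.trans hsup) w

end SpectralSet

theorem lp.norm_sq_eq_sum_of_support_subset {ι : Type*} {E : ι → Type*}
    [∀ i, NormedAddCommGroup (E i)] (f : lp E 2) {s : Finset ι} (hf : ∀ i ∉ s, f i = 0) :
    ‖f‖ ^ 2 = ∑ i ∈ s, ‖f i‖ ^ 2 := by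
  have hsum := lp.hasSum_norm (p := 2) (by norm_num) f
  simp only [ENNReal.toReal_ofNat, Real.rpow_ofNat] at hsum
  exact hsum.unique (hasSum_sum_of_ne_finset_zero fun i hi => by simp [hf i hi])

def IsForwardShift {X : Type*} [NormedAddCommGroup X]
    (S : lp (fun _ : ℕ => X) 2 → lp (fun _ : ℕ => X) 2) : Prop :=
  ∀ x, S x 0 = 0 ∧ ∀ n, S x (n + 1) = x n

theorem IsForwardShift.norm_sq_le {X : Type*} [NormedAddCommGroup X] [NormedSpace ℂ X]
    {S : lp (fun _ : ℕ => X) 2 → lp (fun _ : ℕ => X) 2} (hS : IsForwardShift S) {c : ℂ}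
    (h : ∀ w, ‖c • w - S w‖ ≤ ‖w - c • S w‖) (x y : X) :
    ‖c • x‖ ^ 2 + ‖c • y - x‖ ^ 2 + ‖y‖ ^ 2 ≤ ‖x‖ ^ 2 + ‖y - c • x‖ ^ 2 + ‖c • y‖ ^ 2 := by
  set w : lp (fun _ : ℕ => X) 2 := lp.single 2 0 x + lp.single 2 1 y
  have hw0 : w 0 = x := by simp [w]
  have hw1 : w 1 = y := by simp [w]
  have hw : ∀ n, w (n + 2) = 0 := fun n => by simp [w]
  obtain ⟨hS0, hS⟩ := hS w
  have hsupp : ∀ v : lp (fun _ : ℕ => X) 2, (∀ n, v (n + 2 + 1) = 0) →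
      ‖v‖ ^ 2 = ‖v 0‖ ^ 2 + ‖v 1‖ ^ 2 + ‖v 2‖ ^ 2 := fun v hv => by
    rw [lp.norm_sq_eq_sum_of_support_subset v (s := Finset.range 3), Finset.sum_range_succ,
      Finset.sum_range_succ, Finset.sum_range_one]
    intro i hi
    obtain ⟨n, rfl⟩ := Nat.exists_eq_add_of_le' (not_lt.1 (mt Finset.mem_range.2 hi))
    exact hv n
  have hL := hsupp (c • w - S w) fun n => by
    rw [lp.coeFn_sub, lp.coeFn_smul, Pi.sub_apply, Pi.smul_apply, hS, hw, hw, smul_zero, sub_zero]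
  have hR := hsupp (w - c • S w) fun n => by
    rw [lp.coeFn_sub, lp.coeFn_smul, Pi.sub_apply, Pi.smul_apply, hS, hw, hw, smul_zero, sub_zero]
  simp only [lp.coeFn_sub, lp.coeFn_smul, Pi.sub_apply, Pi.smul_apply, hS0, hS, hw0, hw1,
    hw 0, smul_zero, sub_zero, zero_sub, norm_neg] at hL hR
  rw [← hL, ← hR]
  exact pow_le_pow_left₀ (norm_nonneg _) (h w) 2

section RealNormedSpace

variable {E : Type*} [NormedAddCommGroup E] [NormedSpace ℝ E]

theorem norm_sub_smul_sq_sub_norm_sub_smul_sq {a : ℝ}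
    (h : ∀ x y : E, ‖a • x‖ ^ 2 + ‖a • y - x‖ ^ 2 + ‖y‖ ^ 2 ≤
      ‖x‖ ^ 2 + ‖y - a • x‖ ^ 2 + ‖a • y‖ ^ 2) (x y : E) :
    ‖x - a • y‖ ^ 2 - ‖y - a • x‖ ^ 2 = (1 - a ^ 2) * (‖x‖ ^ 2 - ‖y‖ ^ 2) := by
  have hxy := h x y
  have hyx := h y x
  simp only [norm_smul, Real.norm_eq_abs, mul_pow, sq_abs] at hxy hyx
  rw [norm_sub_rev (a • y)] at hxy
  rw [norm_sub_rev (a • x)] at hyx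
  linarith

theorem norm_add_three_smul_sq_sub_norm_sub_three_smul_sq
    (h : ∀ x y : E, ‖x - (2⁻¹ : ℝ) • y‖ ^ 2 - ‖y - (2⁻¹ : ℝ) • x‖ ^ 2 =
      (1 - (2⁻¹ : ℝ) ^ 2) * (‖x‖ ^ 2 - ‖y‖ ^ 2)) (u v : E) :
    ‖u + (3 : ℝ) • v‖ ^ 2 - ‖u - (3 : ℝ) • v‖ ^ 2 = 3 * (‖u + v‖ ^ 2 - ‖u - v‖ ^ 2) := by
  have key := h ((2 : ℝ) • (u + v)) ((2 : ℝ) • (u - v))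
  rw [show (2 : ℝ) • (u + v) - (2⁻¹ : ℝ) • (2 : ℝ) • (u - v) = u + (3 : ℝ) • v by module,
    show (2 : ℝ) • (u - v) - (2⁻¹ : ℝ) • (2 : ℝ) • (u + v) = u - (3 : ℝ) • v by module,
    norm_smul, norm_smul, Real.norm_two] at key
  linear_combination key

theorem norm_add_two_smul_sq_add_norm_sub_two_smul_sq
    (h : ∀ u v : E, ‖u + (3 : ℝ) • v‖ ^ 2 - ‖u - (3 : ℝ) • v‖ ^ 2 =
      3 * (‖u + v‖ ^ 2 - ‖u - v‖ ^ 2)) (x y : E) :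
    ‖x + (2 : ℝ) • y‖ ^ 2 + ‖x - (2 : ℝ) • y‖ ^ 2 - 2 * ‖x‖ ^ 2 =
      4 * (‖x + y‖ ^ 2 + ‖x - y‖ ^ 2 - 2 * ‖x‖ ^ 2) := by
  have hplus := h (x + (2⁻¹ : ℝ) • y) ((2⁻¹ : ℝ) • y)
  have hminus := h (x - (2⁻¹ : ℝ) • y) ((2⁻¹ : ℝ) • y)
  rw [show x + (2⁻¹ : ℝ) • y + (3 : ℝ) • (2⁻¹ : ℝ) • y = x + (2 : ℝ) • y by module,
    show x + (2⁻¹ : ℝ) • y - (3 : ℝ) • (2⁻¹ : ℝ) • y = x - y by module,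
    show x + (2⁻¹ : ℝ) • y + (2⁻¹ : ℝ) • y = x + y by module,
    show x + (2⁻¹ : ℝ) • y - (2⁻¹ : ℝ) • y = x by module] at hplus
  rw [show x - (2⁻¹ : ℝ) • y + (3 : ℝ) • (2⁻¹ : ℝ) • y = x + y by module,
    show x - (2⁻¹ : ℝ) • y - (3 : ℝ) • (2⁻¹ : ℝ) • y = x - (2 : ℝ) • y by module,
    show x - (2⁻¹ : ℝ) • y + (2⁻¹ : ℝ) • y = x by module,
    show x - (2⁻¹ : ℝ) • y - (2⁻¹ : ℝ) • y = x - y by module] at hminus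
  linear_combination hplus - hminus

theorem parallelogram_law_of_norm_two_smul
    (h : ∀ x y : E, ‖x + (2 : ℝ) • y‖ ^ 2 + ‖x - (2 : ℝ) • y‖ ^ 2 - 2 * ‖x‖ ^ 2 =
      4 * (‖x + y‖ ^ 2 + ‖x - y‖ ^ 2 - 2 * ‖x‖ ^ 2)) (x y : E) :
    ‖x + y‖ ^ 2 + ‖x - y‖ ^ 2 = 2 * (‖x‖ ^ 2 + ‖y‖ ^ 2) := by
  have hxy := h x y
  have hyx := h y ((2⁻¹ : ℝ) • x)
  rw [show y + (2 : ℝ) • (2⁻¹ : ℝ) • x = x + y by module,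
    show y - (2 : ℝ) • (2⁻¹ : ℝ) • x = -(x - y) by module, norm_neg] at hyx
  rw [show x + (2 : ℝ) • y = (2 : ℝ) • (y + (2⁻¹ : ℝ) • x) by module,
    show x - (2 : ℝ) • y = -((2 : ℝ) • (y - (2⁻¹ : ℝ) • x)) by module,
    norm_neg, norm_smul, norm_smul, Real.norm_two] at hxy
  linear_combination -(hxy + hyx) / 3

end RealNormedSpace

theorem stmt_13_general (X : Type) [NormedAddCommGroup X] [NormedSpace ℂ X]
    (Mz : lp (fun _ : ℕ => X) 2 →L[ℂ] lp (fun _ : ℕ => X) 2)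
    (hMz : ∀ x : lp (fun _ : ℕ => X) 2,
      Mz x 0 = 0 ∧ ∀ n : ℕ, Mz x (n + 1) = x n)
    (hvN : ∀ p q : ℂ[X], (∀ z ∈ closedBall (0 : ℂ) 1, q.eval z ≠ 0) →
      IsUnit (aeval Mz q) ∧
      ‖aeval Mz p * Ring.inverse (aeval Mz q)‖ ≤
        sSup ((fun z => ‖p.eval z / q.eval z‖) '' closedBall (0 : ℂ) 1)) :
    (∀ x y : X, ‖x + y‖ ^ 2 + ‖x - y‖ ^ 2 = 2 * (‖x‖ ^ 2 + ‖y‖ ^ 2)) ∧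
      Nonempty (InnerProductSpace ℂ X) := by
  have hshift : ∀ x y : X, ‖(2⁻¹ : ℝ) • x‖ ^ 2 + ‖(2⁻¹ : ℝ) • y - x‖ ^ 2 + ‖y‖ ^ 2 ≤
      ‖x‖ ^ 2 + ‖y - (2⁻¹ : ℝ) • x‖ ^ 2 + ‖(2⁻¹ : ℝ) • y‖ ^ 2 := by
    have hMobius := norm_ofReal_smul_sub_le_of_closedBall_spectralSet hvN (a := 2⁻¹) (by norm_num)
    simpa only [Complex.coe_smul] using IsForwardShift.norm_sq_le hMz hMobius
  have parallelogram := parallelogram_law_of_norm_two_smul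
    (norm_add_two_smul_sq_add_norm_sub_two_smul_sq
      (norm_add_three_smul_sq_sub_norm_sub_three_smul_sq
        (norm_sub_smul_sq_sub_norm_sub_smul_sq hshift)))
  refine ⟨parallelogram, ⟨InnerProductSpace.ofNorm ℂ fun x y => ?_⟩⟩
  simpa only [← sq] using parallelogram x y

/-- If `X` is a complex Banach space and the closed unit disk is a spectral set for the
forward shift `M_z (a₀, a₁, a₂, …) = (0, a₀, a₁, …)` on `ℓ²(X)`, then the norm of `X`
satisfies the parallelogram law; equivalently, `X` is a Hilbert space. -/
theorem stmt_13 (X : Type) [NormedAddCommGroup X] [NormedSpace ℂ X] [CompleteSpace X]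
    (Mz : lp (fun _ : ℕ => X) 2 →L[ℂ] lp (fun _ : ℕ => X) 2)
    (hMz : ∀ x : lp (fun _ : ℕ => X) 2,
      Mz x 0 = 0 ∧ ∀ n : ℕ, Mz x (n + 1) = x n)
    (hspec : spectrum ℂ Mz ⊆ closedBall (0 : ℂ) 1)
    (hvN : ∀ p q : ℂ[X], (∀ z ∈ closedBall (0 : ℂ) 1, q.eval z ≠ 0) →
      IsUnit (aeval Mz q) ∧
      ‖aeval Mz p * Ring.inverse (aeval Mz q)‖ ≤
        sSup ((fun z => ‖p.eval z / q.eval z‖) '' closedBall (0 : ℂ) 1)) :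
    (∀ x y : X, ‖x + y‖ ^ 2 + ‖x - y‖ ^ 2 = 2 * (‖x‖ ^ 2 + ‖y‖ ^ 2)) ∧
      Nonempty (InnerProductSpace ℂ X) :=
  stmt_13_general X Mz hMz hvN
end

section
/- Let X = ℂ² equipped with the ℓ¹-norm ‖(x, y)‖ = |x| + |y|, let λ ∈ (0, 1), and let T_λ : X → X be the operator T_λ(x, y) = (λ(x + y), 0). Then ‖T_λ‖ = λ, and the function A_{T_λ}(v) = (‖v‖² − ‖T_λ v‖²)^{1/2} fails the triangle inequality: for e₁ = (1, 0) and e₂ = (0, 1), A_{T_λ}(e₁ − e₂) = 2 while A_{T_λ}(e₁) + A_{T_λ}(−e₂) = 2√(1 − λ²) < 2. Consequently A_{T_λ} does not define a norm on X (and hence T_λ does not dilate to any isometry). -/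
/-!
`T_λ` factors through the functional `v ↦ v 0 + v 1`, whose norm on `ℓ¹` is `1`; hence
`‖T_λ‖ = λ`. The vector `e₁ - e₂` lies in the kernel, so `A_{T_λ}` equals the norm `2` there,
while each of `e₁`, `-e₂` has norm `1` and image of norm `λ`, giving `A_{T_λ} = √(1 - λ²) < 1`.
-/

lemma PiLp.norm_fin_two_of_L1 {E : Type*} [SeminormedAddCommGroup E]
    (v : PiLp 1 (fun _ : Fin 2 => E)) : ‖v‖ = ‖v 0‖ + ‖v 1‖ := by
  rw [PiLp.norm_eq_of_L1, Fin.sum_univ_two]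

lemma Real.sqrt_one_sub_sq_lt_one {a : ℝ} (ha : a ≠ 0) : √(1 - a ^ 2) < 1 := by
  rw [Real.sqrt_lt' one_pos]
  have : 0 < a ^ 2 := by positivity
  linarith

section

variable {lam : ℝ} {T : PiLp 1 (fun _ : Fin 2 => ℂ) →L[ℂ] PiLp 1 (fun _ : Fin 2 => ℂ)}

lemma norm_apply_eq_mul_norm_add (hlam : 0 ≤ lam)
    (hT : ∀ v : PiLp 1 (fun _ : Fin 2 => ℂ), T v = ![(lam : ℂ) * (v 0 + v 1), 0])
    (v : PiLp 1 (fun _ : Fin 2 => ℂ)) : ‖T v‖ = lam * ‖v 0 + v 1‖ := by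
  simp [PiLp.norm_fin_two_of_L1, hT, abs_of_nonneg hlam]

lemma opNorm_eq_of_apply_eq (hlam : 0 ≤ lam)
    (hT : ∀ v : PiLp 1 (fun _ : Fin 2 => ℂ), T v = ![(lam : ℂ) * (v 0 + v 1), 0]) :
    ‖T‖ = lam := by
  have hTv := norm_apply_eq_mul_norm_add hlam hT
  refine le_antisymm (T.opNorm_le_bound hlam fun v => ?_) ?_
  · calc ‖T v‖ = lam * ‖v 0 + v 1‖ := hTv v
      _ ≤ lam * (‖v 0‖ + ‖v 1‖) := by gcongr; exact norm_add_le _ _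
      _ = lam * ‖v‖ := by rw [PiLp.norm_fin_two_of_L1]
  · set e : PiLp 1 (fun _ : Fin 2 => ℂ) := WithLp.toLp 1 ![1, 0]
    have he : ‖e‖ = 1 := by simp [PiLp.norm_fin_two_of_L1, e]
    calc lam = ‖T e‖ := by simp [hTv, e]
      _ ≤ ‖T‖ * ‖e‖ := T.le_opNorm e
      _ = ‖T‖ := by rw [he, mul_one]

lemma sqrt_norm_sq_sub_norm_apply_sq (hlam : 0 ≤ lam)
    (hT : ∀ v : PiLp 1 (fun _ : Fin 2 => ℂ), T v = ![(lam : ℂ) * (v 0 + v 1), 0])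
    (v : PiLp 1 (fun _ : Fin 2 => ℂ)) :
    √(‖v‖ ^ 2 - ‖T v‖ ^ 2) = √((‖v 0‖ + ‖v 1‖) ^ 2 - (lam * ‖v 0 + v 1‖) ^ 2) := by
  rw [PiLp.norm_fin_two_of_L1, norm_apply_eq_mul_norm_add hlam hT]

end

theorem stmt_17_general (lam : ℝ) (hlam₀ : 0 < lam)
    (T : PiLp 1 (fun _ : Fin 2 => ℂ) →L[ℂ] PiLp 1 (fun _ : Fin 2 => ℂ))
    (hT : ∀ v : PiLp 1 (fun _ : Fin 2 => ℂ), T v = ![(lam : ℂ) * (v 0 + v 1), 0]) :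
    ‖T‖ = lam ∧
    ∀ A : PiLp 1 (fun _ : Fin 2 => ℂ) → ℝ,
      (A = fun v => Real.sqrt (‖v‖ ^ 2 - ‖T v‖ ^ 2)) →
      ∀ e₁ e₂ : PiLp 1 (fun _ : Fin 2 => ℂ), e₁ = WithLp.toLp 1 (![1, 0] : Fin 2 → ℂ) → e₂ = WithLp.toLp 1 (![0, 1] : Fin 2 → ℂ) →
        A (e₁ - e₂) = 2 ∧
        A e₁ + A (-e₂) = 2 * Real.sqrt (1 - lam ^ 2) ∧
        2 * Real.sqrt (1 - lam ^ 2) < 2 ∧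
        ¬ (∀ v w : PiLp 1 (fun _ : Fin 2 => ℂ), A (v + w) ≤ A v + A w) := by
  refine ⟨opNorm_eq_of_apply_eq hlam₀.le hT, ?_⟩
  rintro A rfl e₁ e₂ rfl rfl
  have hA := sqrt_norm_sq_sub_norm_apply_sq hlam₀.le hT
  set e₁ : PiLp 1 (fun _ : Fin 2 => ℂ) := WithLp.toLp 1 ![1, 0]
  set e₂ : PiLp 1 (fun _ : Fin 2 => ℂ) := WithLp.toLp 1 ![0, 1]
  have hdiff : √(‖e₁ - e₂‖ ^ 2 - ‖T (e₁ - e₂)‖ ^ 2) = 2 := by rw [hA]; norm_num [e₁, e₂]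
  have he₁ : √(‖e₁‖ ^ 2 - ‖T e₁‖ ^ 2) = √(1 - lam ^ 2) := by rw [hA]; simp [e₁]
  have he₂ : √(‖-e₂‖ ^ 2 - ‖T (-e₂)‖ ^ 2) = √(1 - lam ^ 2) := by rw [hA]; simp [e₂]
  have hlt : 2 * √(1 - lam ^ 2) < 2 := by
    linarith [Real.sqrt_one_sub_sq_lt_one hlam₀.ne']
  refine ⟨hdiff, by simp only [he₁, he₂]; ring, hlt, fun htri => ?_⟩
  have := htri e₁ (-e₂)
  simp only [← sub_eq_add_neg] at this
  linarith

/-- On `X = ℂ²` with the `ℓ¹`-norm, the operator `T_λ (x, y) = (λ(x + y), 0)` (for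
`0 < λ < 1`) has norm `λ`, and the function `A_{T_λ}(v) = (‖v‖² − ‖T_λ v‖²)^{1/2}` fails the
triangle inequality (witnessed by `e₁ = (1,0)`, `e₂ = (0,1)`); consequently `A_{T_λ}` is not
a norm on `X` (and hence `T_λ` does not dilate to any isometry). -/
theorem stmt_17 (lam : ℝ) (hlam₀ : 0 < lam) (hlam₁ : lam < 1)
    (T : PiLp 1 (fun _ : Fin 2 => ℂ) →L[ℂ] PiLp 1 (fun _ : Fin 2 => ℂ))
    (hT : ∀ v : PiLp 1 (fun _ : Fin 2 => ℂ), T v = ![(lam : ℂ) * (v 0 + v 1), 0]) :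
    ‖T‖ = lam ∧
    ∀ A : PiLp 1 (fun _ : Fin 2 => ℂ) → ℝ,
      (A = fun v => Real.sqrt (‖v‖ ^ 2 - ‖T v‖ ^ 2)) →
      ∀ e₁ e₂ : PiLp 1 (fun _ : Fin 2 => ℂ), e₁ = WithLp.toLp 1 (![1, 0] : Fin 2 → ℂ) → e₂ = WithLp.toLp 1 (![0, 1] : Fin 2 → ℂ) →
        A (e₁ - e₂) = 2 ∧
        A e₁ + A (-e₂) = 2 * Real.sqrt (1 - lam ^ 2) ∧
        2 * Real.sqrt (1 - lam ^ 2) < 2 ∧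
        ¬ (∀ v w : PiLp 1 (fun _ : Fin 2 => ℂ), A (v + w) ≤ A v + A w) :=
  stmt_17_general lam hlam₀ T hT
end

section
/- Let H be a nonzero complex Hilbert space and let X = H ⊕₁ H be the Banach space of pairs (h₁, h₂) with norm ‖(h₁, h₂)‖ = ‖h₁‖ + ‖h₂‖. For r ∈ (0, 1) define T_r : X → X by T_r(h₁, h₂) = (r·h₁, 0). Then there exists r ∈ (0, 1) such that the function A_{T_r}(v) = (‖v‖² − ‖T_r v‖²)^{1/2} fails the triangle inequality: for a unit vector e ∈ H and e₁ = (e, 0), e₂ = (0, e), one has A_{T_r}(e₁ + e₂) = √(4 − r²) > 1 + √(1 − r²) = A_{T_r}(e₁) + A_{T_r}(e₂). Consequently A_{T_r} does not define a norm on X (and hence T_r does not dilate to any isometry). -/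
/-! In `H ⊕₁ H` the vectors `e₁ = (e, 0)` and `e₂ = (0, e)` have norm `1` while their sum has
norm `2`, and `T_r` only sees first coordinates, so `A(e₁) = √(1 - r²)`, `A(e₂) = 1` and
`A(e₁ + e₂) = √(4 - r²)`. Writing `s = √(1 - r²)`, the triangle inequality would say
`(1 + s)² = 2 + 2s - r² ≥ 4 - r²`, i.e. `s ≥ 1`, which fails as soon as `r ≠ 0`. -/

theorem one_add_sqrt_one_sub_sq_lt_sqrt_four_sub_sq {r : ℝ} (hr₀ : 0 < r) (hr₁ : r ≤ 1) :
    1 + √(1 - r ^ 2) < √(4 - r ^ 2) := by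
  have hs : √(1 - r ^ 2) ^ 2 = 1 - r ^ 2 := Real.sq_sqrt (by nlinarith)
  have hs_lt_one : √(1 - r ^ 2) < 1 := by
    rw [Real.sqrt_lt' one_pos]
    nlinarith
  rw [Real.lt_sqrt (by positivity)]
  nlinarith

theorem sqrt_norm_sq_sub_norm_sq_toLp_one_prod {E : Type*} [NormedAddCommGroup E]
    [NormedSpace ℂ E] {r : ℝ} (hr : 0 ≤ r) (T : WithLp 1 (E × E) → WithLp 1 (E × E))
    (hT : ∀ v, T v = WithLp.toLp 1 ((r : ℂ) • v.ofLp.1, 0)) (x y : E) :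
    √(‖WithLp.toLp 1 (x, y)‖ ^ 2 - ‖T (WithLp.toLp 1 (x, y))‖ ^ 2)
      = √((‖x‖ + ‖y‖) ^ 2 - (r * ‖x‖) ^ 2) := by
  simp [hT, WithLp.prod_norm_eq_of_L1, norm_smul, abs_of_nonneg hr]

theorem stmt_19_general (H : Type) [NormedAddCommGroup H] [InnerProductSpace ℂ H] :
    ∃ r : ℝ, 0 < r ∧ r < 1 ∧
      ∀ T : WithLp 1 (H × H) →L[ℂ] WithLp 1 (H × H),
        (∀ v : WithLp 1 (H × H), T v = WithLp.toLp 1 ((r : ℂ) • v.ofLp.1, 0)) →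
        ∀ A : WithLp 1 (H × H) → ℝ,
          (A = fun v => Real.sqrt (‖v‖ ^ 2 - ‖T v‖ ^ 2)) →
          ∀ e : H, ‖e‖ = 1 →
            ∀ e₁ e₂ : WithLp 1 (H × H), e₁ = WithLp.toLp 1 (e, 0) → e₂ = WithLp.toLp 1 (0, e) →
              A (e₁ + e₂) = Real.sqrt (4 - r ^ 2) ∧
              A e₁ + A e₂ = 1 + Real.sqrt (1 - r ^ 2) ∧
              1 + Real.sqrt (1 - r ^ 2) < Real.sqrt (4 - r ^ 2) ∧
              ¬ (∀ v w : WithLp 1 (H × H), A (v + w) ≤ A v + A w) := by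
  refine ⟨1 / 2, by norm_num, by norm_num, ?_⟩
  rintro T hT A hA_def e he e₁ e₂ rfl rfl
  have hA : ∀ x y : H, A (WithLp.toLp 1 (x, y)) = √((‖x‖ + ‖y‖) ^ 2 - (1 / 2 * ‖x‖) ^ 2) := by
    subst hA_def
    exact sqrt_norm_sq_sub_norm_sq_toLp_one_prod (by norm_num) T hT
  have h_sum : WithLp.toLp 1 (e, 0) + WithLp.toLp 1 (0, e) = WithLp.toLp 1 (e, e) := by
    rw [← WithLp.toLp_add, Prod.mk_add_mk, add_zero, zero_add]
  have h_sum_value : A (WithLp.toLp 1 (e, 0) + WithLp.toLp 1 (0, e)) = √(4 - (1 / 2) ^ 2) := by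
    rw [h_sum, hA, he]; norm_num
  have h_parts_value : A (WithLp.toLp 1 (e, 0)) + A (WithLp.toLp 1 (0, e))
      = 1 + √(1 - (1 / 2) ^ 2) := by
    rw [hA, hA, he]; norm_num [add_comm]
  have h_lt := one_add_sqrt_one_sub_sq_lt_sqrt_four_sub_sq (r := 1 / 2) (by norm_num) (by norm_num)
  refine ⟨h_sum_value, h_parts_value, h_lt, fun h_triangle => ?_⟩
  have := h_triangle (WithLp.toLp 1 (e, 0)) (WithLp.toLp 1 (0, e))
  rw [h_sum_value, h_parts_value] at this
  exact this.not_gt h_lt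

/-- Let `H` be a nonzero complex Hilbert space and `X = H ⊕₁ H`. Then there is `r ∈ (0,1)`
such that for the operator `T_r (h₁, h₂) = (r h₁, 0)` on `X`, the function
`A_{T_r}(v) = (‖v‖² − ‖T_r v‖²)^{1/2}` fails the triangle inequality: for a unit vector
`e ∈ H`, with `e₁ = (e, 0)` and `e₂ = (0, e)`, one has
`A(e₁ + e₂) = √(4 − r²) > 1 + √(1 − r²) = A(e₁) + A(e₂)`. Consequently `A_{T_r}` is not a
norm on `X` (and hence `T_r` does not dilate to any isometry). -/
theorem stmt_19 (H : Type) [NormedAddCommGroup H] [InnerProductSpace ℂ H] [CompleteSpace H]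
    [Nontrivial H] :
    ∃ r : ℝ, 0 < r ∧ r < 1 ∧
      ∀ T : WithLp 1 (H × H) →L[ℂ] WithLp 1 (H × H),
        (∀ v : WithLp 1 (H × H), T v = WithLp.toLp 1 ((r : ℂ) • v.ofLp.1, 0)) →
        ∀ A : WithLp 1 (H × H) → ℝ,
          (A = fun v => Real.sqrt (‖v‖ ^ 2 - ‖T v‖ ^ 2)) →
          ∀ e : H, ‖e‖ = 1 →
            ∀ e₁ e₂ : WithLp 1 (H × H), e₁ = WithLp.toLp 1 (e, 0) → e₂ = WithLp.toLp 1 (0, e) →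
              A (e₁ + e₂) = Real.sqrt (4 - r ^ 2) ∧
              A e₁ + A e₂ = 1 + Real.sqrt (1 - r ^ 2) ∧
              1 + Real.sqrt (1 - r ^ 2) < Real.sqrt (4 - r ^ 2) ∧
              ¬ (∀ v w : WithLp 1 (H × H), A (v + w) ≤ A v + A w) :=
  stmt_19_general H
end
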